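/- arXiv:2206.02634 — 5 statements merged into one kernel-verified Lean document; each statement's English description precedes it below -/
import Mathlib

section
/- Let F be a finite field with q elements and A = E₁₁ ∈ M₃(F). The number of matrices X ∈ M₃(F) with rank X = 1 and tr(AX) = 0 (i.e., X₁₁ = 0) equals (q²−1)q² + (q³−1)q + (q³−1). -/
open Matrix

section Aux
variable {F : Type} [Field F]

lemma vecMulVec_mulVec' (w v x : Fin 3 → F) :
    (vecMulVec w v).mulVec x = (v ⬝ᵥ x) • w := by
  ext i
  simp only [mulVec, dotProduct, vecMulVec_apply, Pi.smul_apply, smul_eq_mul,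
    Finset.sum_mul]
  exact Finset.sum_congr rfl (fun j _ => by ring)

lemma range_vecMulVec {w v : Fin 3 → F} (hv : v ≠ 0) :
    LinearMap.range (vecMulVec w v).mulVecLin = Submodule.span F {w} := by
  apply le_antisymm
  · rintro y ⟨x, rfl⟩
    rw [mulVecLin_apply, vecMulVec_mulVec']
    exact Submodule.smul_mem _ _ (Submodule.mem_span_singleton_self w)
  · rw [Submodule.span_le, Set.singleton_subset_iff]
    obtain ⟨i, hi⟩ := Function.ne_iff.mp hv
    refine ⟨Pi.single i (v i)⁻¹, ?_⟩
    rw [mulVecLin_apply, vecMulVec_mulVec']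
    simp [dotProduct, Pi.single_apply, mul_inv_cancel₀ (by simpa using hi)]

lemma rank_vecMulVec_one {w v : Fin 3 → F} (hw : w ≠ 0) (hv : v ≠ 0) :
    (vecMulVec w v).rank = 1 := by
  rw [Matrix.rank, range_vecMulVec hv]
  exact finrank_span_singleton hw

lemma rank1_decomp {X : Matrix (Fin 3) (Fin 3) F} (h : X.rank = 1) :
    ∃ w v : Fin 3 → F, w ≠ 0 ∧ v ≠ 0 ∧ X = vecMulVec w v := by
  rw [Matrix.rank] at h
  obtain ⟨⟨w, hwmem⟩, hw0, hall⟩ := (finrank_eq_one_iff').mp h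
  have hw : w ≠ 0 := fun hh => hw0 (Subtype.ext hh)
  have hcol : ∀ j : Fin 3, ∃ c : F, c • w = fun i => X i j := by
    intro j
    have hmem : (fun i => X i j) ∈ LinearMap.range X.mulVecLin := by
      refine ⟨Pi.single j 1, ?_⟩
      ext i
      simp [mulVecLin_apply, mulVec_single]
    obtain ⟨c, hc⟩ := hall ⟨_, hmem⟩
    exact ⟨c, congrArg Subtype.val hc⟩
  choose c hc using hcol
  refine ⟨w, c, hw, ?_, ?_⟩
  · intro hc0
    have hX : X = 0 := by
      ext i j
      have := congrFun (hc j) i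
      simp only [Pi.smul_apply, smul_eq_mul] at this
      rw [← this, congrFun hc0 j]
      simp
    rw [hX, mulVecLin_zero, LinearMap.range_zero, finrank_bot] at h
    exact one_ne_zero h.symm
  · ext i j
    have := congrFun (hc j) i
    simp only [Pi.smul_apply, smul_eq_mul] at this
    rw [vecMulVec_apply, ← this, mul_comm]

lemma trace_E00 (X : Matrix (Fin 3) (Fin 3) F) :
    (Matrix.single 0 0 (1 : F) * X).trace = X 0 0 := by
  simp [Matrix.trace, Matrix.diag, Matrix.mul_apply, Matrix.single,
    Fin.sum_univ_three]

end Aux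

theorem stmt_2 (F : Type) [Field F] [Fintype F] [DecidableEq F] :
    Nat.card {X : Matrix (Fin 3) (Fin 3) F //
        X.rank = 1 ∧ (Matrix.single 0 0 (1 : F) * X).trace = 0} =
    ((Fintype.card F) ^ 2 - 1) * (Fintype.card F) ^ 2
      + ((Fintype.card F) ^ 3 - 1) * (Fintype.card F)
      + ((Fintype.card F) ^ 3 - 1) := by
  set S := {X : Matrix (Fin 3) (Fin 3) F //
      X.rank = 1 ∧ (Matrix.single 0 0 (1 : F) * X).trace = 0} with hS
  set T := (((F × F) × {p : F × F // p ≠ 0}) ⊕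
      ((F × {w : Fin 3 → F // w ≠ 0}) ⊕ {w : Fin 3 → F // w ≠ 0})) with hT
  have mem_iff : ∀ X : Matrix (Fin 3) (Fin 3) F,
      (X.rank = 1 ∧ (Matrix.single 0 0 (1 : F) * X).trace = 0) ↔
      (X.rank = 1 ∧ X 0 0 = 0) := by
    intro X; rw [trace_E00]
  have h1ne : ∀ a b : F, (![1, a, b] : Fin 3 → F) ≠ 0 := fun a b h => by
    have := congrFun h 0; simp at this
  have h01ne : ∀ c : F, (![0, 1, c] : Fin 3 → F) ≠ 0 := fun c h => by
    have := congrFun h 1; simp at this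
  have h001ne : (![0, 0, 1] : Fin 3 → F) ≠ 0 := fun h => by
    have := congrFun h 2; simp at this
  let f : T → S := fun t =>
    match t with
    | Sum.inl ((a, b), ⟨p, hp⟩) =>
        ⟨vecMulVec ![0, p.1, p.2] ![1, a, b], by
          refine (mem_iff _).mpr ⟨rank_vecMulVec_one ?_ (h1ne a b), by
            simp [vecMulVec_apply]⟩
          intro h
          apply hp
          have h1 := congrFun h 1
          have h2 := congrFun h 2
          simp at h1 h2
          exact Prod.ext h1 h2⟩
    | Sum.inr (Sum.inl (c, ⟨w, hw⟩)) =>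
        ⟨vecMulVec w ![0, 1, c], (mem_iff _).mpr
          ⟨rank_vecMulVec_one hw (h01ne c), by simp [vecMulVec_apply]⟩⟩
    | Sum.inr (Sum.inr ⟨w, hw⟩) =>
        ⟨vecMulVec w ![0, 0, 1], (mem_iff _).mpr
          ⟨rank_vecMulVec_one hw h001ne, by simp [vecMulVec_apply]⟩⟩
  have hinj : Function.Injective f := by
    rintro (⟨⟨a, b⟩, ⟨p, hp⟩⟩ | (⟨c, ⟨w, hw⟩⟩ | ⟨w, hw⟩))
        (⟨⟨a', b'⟩, ⟨p', hp'⟩⟩ | (⟨c', ⟨w', hw'⟩⟩ | ⟨w', hw'⟩)) h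
    · have hm : vecMulVec ![0, p.1, p.2] ![1, a, b]
          = vecMulVec ![0, p'.1, p'.2] ![1, a', b'] := congrArg Subtype.val h
      have he : ∀ i j, (![0, p.1, p.2] : Fin 3 → F) i * (![1, a, b] : Fin 3 → F) j
          = (![0, p'.1, p'.2] : Fin 3 → F) i * (![1, a', b'] : Fin 3 → F) j := by
        intro i j
        rw [← vecMulVec_apply, ← vecMulVec_apply, hm]
      have hp1 : p.1 = p'.1 := by have := he 1 0; simpa using this
      have hp2 : p.2 = p'.2 := by have := he 2 0; simpa using this
      have hpp : p = p' := Prod.ext hp1 hp2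
      have hone : p.1 ≠ 0 ∨ p.2 ≠ 0 := by
        by_contra hcon
        push_neg at hcon
        exact hp (Prod.ext hcon.1 hcon.2)
      have ha : a = a' := by
        rcases hone with h1 | h2
        · have := he 1 1; rw [← hp1] at this; simpa using
            mul_left_cancel₀ h1 (by simpa using this)
        · have := he 2 1; rw [← hp2] at this; simpa using
            mul_left_cancel₀ h2 (by simpa using this)
      have hb : b = b' := by
        rcases hone with h1 | h2
        · have := he 1 2; rw [← hp1] at this; simpa using
            mul_left_cancel₀ h1 (by simpa using this)
        · have := he 2 2; rw [← hp2] at this; simpa using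
            mul_left_cancel₀ h2 (by simpa using this)
      subst ha; subst hb; subst hpp; rfl
    · exfalso
      have hm : vecMulVec ![0, p.1, p.2] ![1, a, b]
          = vecMulVec w' ![0, 1, c'] := congrArg Subtype.val h
      have h1 := congrFun (congrFun hm 1) 0
      have h2 := congrFun (congrFun hm 2) 0
      simp [vecMulVec_apply] at h1 h2
      exact hp (Prod.ext h1 h2)
    · exfalso
      have hm : vecMulVec ![0, p.1, p.2] ![1, a, b]
          = vecMulVec w' ![0, 0, 1] := congrArg Subtype.val h
      have h1 := congrFun (congrFun hm 1) 0
      have h2 := congrFun (congrFun hm 2) 0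
      simp [vecMulVec_apply] at h1 h2
      exact hp (Prod.ext h1 h2)
    · exfalso
      have hm : vecMulVec w ![0, 1, c]
          = vecMulVec ![0, p'.1, p'.2] ![1, a', b'] := congrArg Subtype.val h
      have h1 := congrFun (congrFun hm 1) 0
      have h2 := congrFun (congrFun hm 2) 0
      simp [vecMulVec_apply] at h1 h2
      exact hp' (Prod.ext h1.symm h2.symm)
    · have hm : vecMulVec w ![0, 1, c]
          = vecMulVec w' ![0, 1, c'] := congrArg Subtype.val h
      have hww : w = w' := by
        funext i
        have := congrFun (congrFun hm i) 1
        simpa [vecMulVec_apply] using this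
      obtain ⟨i, hi⟩ := Function.ne_iff.mp hw
      have hcc : c = c' := by
        have := congrFun (congrFun hm i) 2
        rw [← hww] at this
        simp only [vecMulVec_apply] at this
        simp at this
        exact this.resolve_right (by simpa using hi)
      subst hww; subst hcc; rfl
    · exfalso
      obtain ⟨i, hi⟩ := Function.ne_iff.mp hw
      have hm : vecMulVec w ![0, 1, c]
          = vecMulVec w' ![0, 0, 1] := congrArg Subtype.val h
      have := congrFun (congrFun hm i) 1
      simp [vecMulVec_apply] at this
      exact hi (by simpa using this)
    · exfalso
      have hm : vecMulVec w ![0, 0, 1]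
          = vecMulVec ![0, p'.1, p'.2] ![1, a', b'] := congrArg Subtype.val h
      have h1 := congrFun (congrFun hm 1) 0
      have h2 := congrFun (congrFun hm 2) 0
      simp [vecMulVec_apply] at h1 h2
      exact hp' (Prod.ext h1.symm h2.symm)
    · exfalso
      obtain ⟨i, hi⟩ := Function.ne_iff.mp hw'
      have hm : vecMulVec w ![0, 0, 1]
          = vecMulVec w' ![0, 1, c'] := congrArg Subtype.val h
      have := congrFun (congrFun hm i) 1
      simp [vecMulVec_apply] at this
      exact hi (by simpa using this.symm)
    · have hm : vecMulVec w ![0, 0, 1]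
          = vecMulVec w' ![0, 0, 1] := congrArg Subtype.val h
      have hww : w = w' := by
        funext i
        have := congrFun (congrFun hm i) 2
        simpa [vecMulVec_apply] using this
      subst hww; rfl
  have hsurj : Function.Surjective f := by
    rintro ⟨X, hX⟩
    obtain ⟨hrk, hX00⟩ := (mem_iff X).mp hX
    obtain ⟨w, v, hw, hv, rfl⟩ := rank1_decomp hrk
    have hX00' : w 0 * v 0 = 0 := by simpa [vecMulVec_apply] using hX00
    by_cases hv0 : v 0 = 0
    · by_cases hv1 : v 1 = 0
      · have hv2 : v 2 ≠ 0 := by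
          intro hv2
          apply hv
          funext i
          fin_cases i <;> simp [hv0, hv1, hv2]
        refine ⟨Sum.inr (Sum.inr ⟨v 2 • w, smul_ne_zero hv2 hw⟩), ?_⟩
        apply Subtype.ext
        show vecMulVec (v 2 • w) ![0, 0, 1] = vecMulVec w v
        ext i j
        fin_cases j <;> simp [vecMulVec_apply, hv0, hv1, mul_comm]
      · refine ⟨Sum.inr (Sum.inl (v 2 / v 1, ⟨v 1 • w, smul_ne_zero hv1 hw⟩)), ?_⟩
        apply Subtype.ext
        show vecMulVec (v 1 • w) ![0, 1, v 2 / v 1] = vecMulVec w v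
        ext i j
        fin_cases j <;> simp [vecMulVec_apply, hv0, mul_comm] <;>
          (try field_simp) <;> (try ring)
    · have hw0 : w 0 = 0 := by
        rcases mul_eq_zero.mp hX00' with h | h
        · exact h
        · exact absurd h hv0
      have hpne : (v 0 * w 1, v 0 * w 2) ≠ (0 : F × F) := by
        intro hc
        apply hw
        have h1 : v 0 * w 1 = 0 := congrArg Prod.fst hc
        have h2 : v 0 * w 2 = 0 := congrArg Prod.snd hc
        funext i
        fin_cases i
        · exact hw0
        · simpa [hv0] using (mul_eq_zero.mp h1).resolve_left hv0
        · simpa [hv0] using (mul_eq_zero.mp h2).resolve_left hv0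
      refine ⟨Sum.inl ((v 1 / v 0, v 2 / v 0), ⟨(v 0 * w 1, v 0 * w 2), hpne⟩), ?_⟩
      apply Subtype.ext
      show vecMulVec ![0, v 0 * w 1, v 0 * w 2] ![1, v 1 / v 0, v 2 / v 0]
          = vecMulVec w v
      ext i j
      fin_cases i <;> fin_cases j <;>
        simp [vecMulVec_apply, hw0, mul_comm] <;> (try field_simp) <;> (try ring)
  have hcard : Nat.card S = Nat.card T :=
    (Nat.card_congr (Equiv.ofBijective f ⟨hinj, hsurj⟩)).symm
  rw [hS] at hcard
  rw [hcard, hT]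
  have c1 : Fintype.card {p : F × F // p ≠ 0} = Fintype.card F ^ 2 - 1 := by
    rw [Fintype.card_subtype_compl, Fintype.card_subtype_eq, Fintype.card_prod, ← sq]
  have c2 : Fintype.card {w : Fin 3 → F // w ≠ 0} = Fintype.card F ^ 3 - 1 := by
    rw [Fintype.card_subtype_compl, Fintype.card_subtype_eq, Fintype.card_fun,
      Fintype.card_fin]
  simp only [Nat.card_sum, Nat.card_prod, Nat.card_eq_fintype_card, c1, c2,
    Fintype.card_prod, Fintype.card_sum]
  set q := Fintype.card F
  set A := q ^ 2 - 1
  set B := q ^ 3 - 1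
  ring
end

section
/- Let F be a finite field with q elements. The number of invertible matrices X ∈ GL₃(F) with X₁₁ = 0 equals (q²−1)(q³−q)(q³−q²), and the number with X₁₁ = 1 equals q²(q³−q)(q³−q²). Consequently their difference equals −(q³−q)(q³−q²) = −(q−1)²(q+1)q³. -/
open Matrix

namespace Stmt3Aux

variable {F : Type} [Field F] [Fintype F] [DecidableEq F]

/-- The first column of a `GL` element. -/
def col0 (X : GL (Fin 3) F) : Fin 3 → F := fun i => (X : Matrix (Fin 3) (Fin 3) F) i 0

lemma col0_mul (A B : GL (Fin 3) F) :
    col0 (A * B) = (A : Matrix (Fin 3) (Fin 3) F).mulVec (col0 B) := by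
  funext i
  simp [col0, Matrix.mul_apply, Matrix.mulVec, dotProduct, Units.val_mul]

lemma col0_zero_zero (X : GL (Fin 3) F) : col0 X 0 = (X : Matrix (Fin 3) (Fin 3) F) 0 0 := rfl

lemma col0_one_zero : col0 (1 : GL (Fin 3) F) 0 = 1 := by
  simp [col0]

lemma col0_ne_zero (X : GL (Fin 3) F) : col0 X ≠ 0 := by
  intro h
  have h1 : col0 (X⁻¹ * X) = 0 := by rw [col0_mul, h, Matrix.mulVec_zero]
  rw [inv_mul_cancel] at h1
  have h2 := congrFun h1 0
  rw [col0_one_zero] at h2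
  simp at h2

lemma exists_col0 (w : Fin 3 → F) (hw : w ≠ 0) : ∃ X : GL (Fin 3) F, col0 X = w := by
  obtain ⟨k, hk⟩ := Function.ne_iff.mp hw
  simp only [Pi.zero_apply] at hk
  fin_cases k
  · have hd : (!![w 0, 0, 0; w 1, 1, 0; w 2, 0, 1]).det = w 0 := by
      simp [Matrix.det_fin_three]
    have hM : IsUnit (!![w 0, 0, 0; w 1, 1, 0; w 2, 0, 1]) := by
      rw [Matrix.isUnit_iff_isUnit_det, hd]
      exact isUnit_iff_ne_zero.mpr hk
    exact ⟨hM.unit, by funext i; fin_cases i <;> simp [col0, hM.unit_spec]⟩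
  · have hd : (!![w 0, 1, 0; w 1, 0, 0; w 2, 0, 1]).det = -(w 1) := by
      simp [Matrix.det_fin_three]
    have hM : IsUnit (!![w 0, 1, 0; w 1, 0, 0; w 2, 0, 1]) := by
      rw [Matrix.isUnit_iff_isUnit_det, hd]
      exact (isUnit_iff_ne_zero.mpr hk).neg
    exact ⟨hM.unit, by funext i; fin_cases i <;> simp [col0, hM.unit_spec]⟩
  · have hd : (!![w 0, 1, 0; w 1, 0, 1; w 2, 0, 0]).det = w 2 := by
      rw [Matrix.det_fin_three]
      norm_num [Matrix.vecHead, Matrix.vecTail]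
      simp [Matrix.cons_val]
    have hM : IsUnit (!![w 0, 1, 0; w 1, 0, 1; w 2, 0, 0]) := by
      rw [Matrix.isUnit_iff_isUnit_det, hd]
      exact isUnit_iff_ne_zero.mpr hk
    exact ⟨hM.unit, by funext i; fin_cases i <;> simp [col0, hM.unit_spec]⟩

lemma card_fiber (w : Fin 3 → F) (hw : w ≠ 0) :
    Nat.card {X : GL (Fin 3) F // col0 X = w} =
      Nat.card {X : GL (Fin 3) F // col0 X = col0 1} := by
  obtain ⟨X₀, hX₀⟩ := exists_col0 w hw
  apply Nat.card_congr
  refine ⟨fun p => ⟨X₀⁻¹ * p.1, ?_⟩, fun p => ⟨X₀ * p.1, ?_⟩, fun p => ?_, fun p => ?_⟩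
  · rw [col0_mul, p.2, ← hX₀, ← col0_mul, inv_mul_cancel]
  · rw [col0_mul, p.2, ← col0_mul, mul_one, hX₀]
  · exact Subtype.ext (by simp [← mul_assoc])
  · exact Subtype.ext (by simp [← mul_assoc])

lemma card_count (a : F) :
    Nat.card {X : GL (Fin 3) F // (X : Matrix (Fin 3) (Fin 3) F) 0 0 = a} =
      Nat.card {w : Fin 3 → F // w 0 = a ∧ w ≠ 0} *
        Nat.card {X : GL (Fin 3) F // col0 X = col0 1} := by
  classical
  have e : {X : GL (Fin 3) F // (X : Matrix (Fin 3) (Fin 3) F) 0 0 = a} ≃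
      Σ w : {w : Fin 3 → F // w 0 = a ∧ w ≠ 0}, {X : GL (Fin 3) F // col0 X = w.1} := by
    refine (Equiv.sigmaFiberEquiv
      (fun X : {X : GL (Fin 3) F // (X : Matrix (Fin 3) (Fin 3) F) 0 0 = a} =>
        (⟨col0 X.1, X.2, col0_ne_zero X.1⟩ : {w : Fin 3 → F // w 0 = a ∧ w ≠ 0}))).symm.trans ?_
    refine Equiv.sigmaCongrRight fun w => ?_
    refine ⟨fun p => ⟨p.1.1, congrArg Subtype.val p.2⟩,
      fun Y => ⟨⟨Y.1, by rw [← col0_zero_zero, Y.2]; exact w.2.1⟩, Subtype.ext Y.2⟩,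
      fun p => Subtype.ext (Subtype.ext rfl), fun Y => Subtype.ext rfl⟩
  rw [Nat.card_congr e, Nat.card_eq_fintype_card, Fintype.card_sigma]
  have : ∀ w : {w : Fin 3 → F // w 0 = a ∧ w ≠ 0},
      Fintype.card {X : GL (Fin 3) F // col0 X = w.1} =
        Nat.card {X : GL (Fin 3) F // col0 X = col0 1} := by
    intro w
    rw [← Nat.card_eq_fintype_card, card_fiber w.1 w.2.2]
  rw [Finset.sum_congr rfl (fun w _ => this w), Finset.sum_const, smul_eq_mul,
    Finset.card_univ, ← Nat.card_eq_fintype_card]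

lemma card_total :
    Nat.card (GL (Fin 3) F) =
      Nat.card {w : Fin 3 → F // w ≠ 0} *
        Nat.card {X : GL (Fin 3) F // col0 X = col0 1} := by
  classical
  have e : GL (Fin 3) F ≃
      Σ w : {w : Fin 3 → F // w ≠ 0}, {X : GL (Fin 3) F // col0 X = w.1} := by
    refine (Equiv.sigmaFiberEquiv
      (fun X : GL (Fin 3) F => (⟨col0 X, col0_ne_zero X⟩ : {w : Fin 3 → F // w ≠ 0}))).symm.trans ?_
    refine Equiv.sigmaCongrRight fun w => ?_
    exact ⟨fun p => ⟨p.1, congrArg Subtype.val p.2⟩, fun Y => ⟨Y.1, Subtype.ext Y.2⟩,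
      fun p => Subtype.ext rfl, fun Y => Subtype.ext rfl⟩
  rw [Nat.card_congr e, Nat.card_eq_fintype_card, Fintype.card_sigma]
  have : ∀ w : {w : Fin 3 → F // w ≠ 0},
      Fintype.card {X : GL (Fin 3) F // col0 X = w.1} =
        Nat.card {X : GL (Fin 3) F // col0 X = col0 1} := by
    intro w
    rw [← Nat.card_eq_fintype_card, card_fiber w.1 w.2]
  rw [Finset.sum_congr rfl (fun w _ => this w), Finset.sum_const, smul_eq_mul,
    Finset.card_univ, ← Nat.card_eq_fintype_card]

lemma card_nonzero : Nat.card {w : Fin 3 → F // w ≠ 0} = Fintype.card F ^ 3 - 1 := by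
  classical
  rw [Nat.card_eq_fintype_card]
  have h := Fintype.card_subtype_compl (fun w : Fin 3 → F => w = 0)
  simp only [Fintype.card_subtype_eq] at h
  simp only [ne_eq]
  rw [h]
  simp [Fintype.card_fun]

lemma card_w_one : Nat.card {w : Fin 3 → F // w 0 = 1 ∧ w ≠ 0} = Fintype.card F ^ 2 := by
  classical
  have e1 : {w : Fin 3 → F // w 0 = 1 ∧ w ≠ 0} ≃ {w : Fin 3 → F // w 0 = 1} :=
    Equiv.subtypeEquivRight (fun w => by
      constructor
      · exact fun h => h.1
      · intro h
        refine ⟨h, fun h0 => ?_⟩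
        rw [h0] at h
        simp at h)
  have e2 : {w : Fin 3 → F // w 0 = 1} ≃ (Fin 2 → F) := by
    refine ⟨fun w i => w.1 i.succ, fun v => ⟨Fin.cons 1 v, Fin.cons_zero _ _⟩, fun w => ?_, fun v => ?_⟩
    · refine Subtype.ext (funext fun i => ?_)
      refine Fin.cases ?_ (fun j => ?_) i
      · simp [w.2]
      · simp
    · funext i; simp
  rw [Nat.card_congr (e1.trans e2), Nat.card_eq_fintype_card]
  simp [Fintype.card_fun]

lemma card_w_zero :
    Nat.card {w : Fin 3 → F // w 0 = 0 ∧ w ≠ 0} = Fintype.card F ^ 2 - 1 := by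
  classical
  have e : {w : Fin 3 → F // w 0 = 0 ∧ w ≠ 0} ≃ {v : Fin 2 → F // v ≠ 0} := by
    refine ⟨fun w => ⟨fun i => w.1 i.succ, ?_⟩,
      fun v => ⟨Fin.cons 0 v.1, Fin.cons_zero _ _, ?_⟩, fun w => ?_, fun v => ?_⟩
    · intro h0
      apply w.2.2
      funext i
      refine Fin.cases ?_ (fun j => ?_) i
      · exact w.2.1
      · exact congrFun h0 j
    · intro h
      apply v.2
      funext i
      have := congrFun h i.succ
      simpa using this
    · refine Subtype.ext (funext fun i => ?_)
      refine Fin.cases ?_ (fun j => ?_) i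
      · simp [w.2.1]
      · simp
    · exact Subtype.ext (funext fun i => by simp)
  rw [Nat.card_congr e, Nat.card_eq_fintype_card]
  have h := Fintype.card_subtype_compl (fun v : Fin 2 → F => v = 0)
  simp only [Fintype.card_subtype_eq] at h
  simp only [ne_eq]
  rw [h]
  simp [Fintype.card_fun]

lemma card_stab :
    Nat.card {X : GL (Fin 3) F // col0 X = col0 1} =
      (Fintype.card F ^ 3 - Fintype.card F) * (Fintype.card F ^ 3 - Fintype.card F ^ 2) := by
  set q := Fintype.card F with hqdef
  have hq : 1 < q := Fintype.one_lt_card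
  have hq3 : 0 < q ^ 3 - 1 := by
    have : 2 ^ 3 ≤ q ^ 3 := Nat.pow_le_pow_left hq 3
    omega
  have hGL : Nat.card (GL (Fin 3) F) = (q ^ 3 - 1) * ((q ^ 3 - q) * (q ^ 3 - q ^ 2)) := by
    rw [Matrix.card_GL_field]
    rw [Fin.prod_univ_three]
    norm_num [mul_assoc]
    rfl
  have := card_total (F := F)
  rw [card_nonzero, hGL] at this
  exact (Nat.eq_of_mul_eq_mul_left hq3 this.symm)

end Stmt3Aux

open Stmt3Aux

theorem stmt_3 (F : Type) [Field F] [Fintype F] [DecidableEq F] :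
    (Nat.card {X : GL (Fin 3) F // (X : Matrix (Fin 3) (Fin 3) F) 0 0 = 0} =
      ((Fintype.card F) ^ 2 - 1) * ((Fintype.card F) ^ 3 - Fintype.card F)
        * ((Fintype.card F) ^ 3 - (Fintype.card F) ^ 2)) ∧
    (Nat.card {X : GL (Fin 3) F // (X : Matrix (Fin 3) (Fin 3) F) 0 0 = 1} =
      (Fintype.card F) ^ 2 * ((Fintype.card F) ^ 3 - Fintype.card F)
        * ((Fintype.card F) ^ 3 - (Fintype.card F) ^ 2)) ∧
    ((Nat.card {X : GL (Fin 3) F // (X : Matrix (Fin 3) (Fin 3) F) 0 0 = 0} : ℤ)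
        - Nat.card {X : GL (Fin 3) F // (X : Matrix (Fin 3) (Fin 3) F) 0 0 = 1} =
      -(((Fintype.card F : ℤ) ^ 3 - Fintype.card F)
          * ((Fintype.card F : ℤ) ^ 3 - (Fintype.card F : ℤ) ^ 2))) ∧
    (-(((Fintype.card F : ℤ) ^ 3 - Fintype.card F)
          * ((Fintype.card F : ℤ) ^ 3 - (Fintype.card F : ℤ) ^ 2)) =
      -(((Fintype.card F : ℤ) - 1) ^ 2 * ((Fintype.card F : ℤ) + 1)
          * (Fintype.card F : ℤ) ^ 3)) := by
  set q := Fintype.card F with hqdef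
  have hq : 1 < q := Fintype.one_lt_card
  have g1 : Nat.card {X : GL (Fin 3) F // (X : Matrix (Fin 3) (Fin 3) F) 0 0 = 0} =
      (q ^ 2 - 1) * (q ^ 3 - q) * (q ^ 3 - q ^ 2) := by
    rw [card_count, card_w_zero, card_stab, mul_assoc]
  have g2 : Nat.card {X : GL (Fin 3) F // (X : Matrix (Fin 3) (Fin 3) F) 0 0 = 1} =
      q ^ 2 * (q ^ 3 - q) * (q ^ 3 - q ^ 2) := by
    rw [card_count, card_w_one, card_stab, mul_assoc]
  refine ⟨g1, g2, ?_, by ring⟩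
  have h1 : 1 ≤ q ^ 2 := Nat.one_le_pow _ _ (by omega)
  have h2 : q ≤ q ^ 3 := by nlinarith
  have h3 : q ^ 2 ≤ q ^ 3 := by nlinarith
  rw [g1, g2]
  push_cast [Nat.cast_sub h1, Nat.cast_sub h2, Nat.cast_sub h3]
  ring
end

section
/- Let F be a finite field with q elements, M₁ the mirabolic subgroup of GL₃(F) (matrices with last row (0,0,1)), and U₁ the group of upper-triangular unipotent matrices in GL₃(F). Then the union of S₁ = {diag(a,b,1) : a,b ∈ F^×} and S₂ = {matrices with rows (p,q,0),(r,0,0),(0,0,1) : p ∈ F, q,r ∈ F^×} is a complete set of left coset representatives of U₁ in M₁. -/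
open Matrix

private lemma stmt6_isUnit {F : Type} [Field F] [DecidableEq F] (a b c d : F)
    (h : a * d - b * c ≠ 0) :
    IsUnit (Matrix.of ![![a, b, 0], ![c, d, 0], ![0, 0, (1:F)]]) := by
  rw [Matrix.isUnit_iff_isUnit_det, Matrix.det_fin_three, isUnit_iff_ne_zero]
  simpa using by intro hc; apply h; linear_combination hc

private lemma stmt6_key {F : Type} [Field F] [DecidableEq F] (a b c d : F)
    (w m : Matrix (Fin 3) (Fin 3) F)
    (hw1 : w 0 0 = 1) (hw2 : w 1 0 = 0) (hw3 : w 2 0 = 0) (hw4 : w 1 1 = 1) (hw5 : w 2 1 = 0)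
    (hm : Matrix.of ![![a, b, 0], ![c, d, 0], ![0, 0, (1:F)]] * w = m) :
    m 0 0 = a ∧ m 1 0 = c ∧ m 0 1 = a * w 0 1 + b ∧ m 1 1 = c * w 0 1 + d := by
  refine ⟨?_, ?_, ?_, ?_⟩ <;> rw [← hm] <;>
    simp [Matrix.mul_apply, Fin.sum_univ_three, Matrix.vecHead, Matrix.vecTail,
      hw1, hw2, hw3, hw4, hw5]

theorem stmt_6 (F : Type) [Field F] [Fintype F] [DecidableEq F]
    (S₁ S₂ U₁ Mir : Set (Matrix (Fin 3) (Fin 3) F))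
    (hS₁ : S₁ = {t | ∃ a b : F, a ≠ 0 ∧ b ≠ 0 ∧
        t = Matrix.of ![![a, 0, 0], ![0, b, 0], ![0, 0, 1]]})
    (hS₂ : S₂ = {t | ∃ p q r : F, q ≠ 0 ∧ r ≠ 0 ∧
        t = Matrix.of ![![p, q, 0], ![r, 0, 0], ![0, 0, 1]]})
    (hU₁ : U₁ = {u | u 0 0 = 1 ∧ u 1 1 = 1 ∧ u 2 2 = 1 ∧
        u 1 0 = 0 ∧ u 2 0 = 0 ∧ u 2 1 = 0})
    (hMir : Mir = {m | IsUnit m ∧ m 2 0 = 0 ∧ m 2 1 = 0 ∧ m 2 2 = 1}) :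
    ∀ m ∈ Mir, ∃! t, t ∈ S₁ ∪ S₂ ∧ t⁻¹ * m ∈ U₁ := by
  subst hS₁ hS₂ hU₁ hMir
  intro m hm
  obtain ⟨hmu, h20, h21, h22⟩ := hm
  have hdet : m 0 0 * m 1 1 - m 0 1 * m 1 0 ≠ 0 := by
    rw [Matrix.isUnit_iff_isUnit_det, Matrix.det_fin_three, isUnit_iff_ne_zero] at hmu
    intro hc; apply hmu; rw [h20, h21, h22]; linear_combination hc
  by_cases h10 : m 1 0 = 0
  · -- diagonal case
    have hab : m 0 0 * m 1 1 ≠ 0 := by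
      intro hc; apply hdet; rw [h10, hc]; ring
    have ha : m 0 0 ≠ 0 := left_ne_zero_of_mul hab
    have hb : m 1 1 ≠ 0 := right_ne_zero_of_mul hab
    set t : Matrix (Fin 3) (Fin 3) F :=
      Matrix.of ![![m 0 0, 0, 0], ![0, m 1 1, 0], ![0, 0, 1]] with ht
    have htu : IsUnit t := by
      have := stmt6_isUnit (m 0 0) 0 0 (m 1 1) (by simpa using hab); simpa using this
    have hprod : t * Matrix.of ![![1, m 0 1 / m 0 0, m 0 2 / m 0 0],
        ![0, 1, m 1 2 / m 1 1], ![0, 0, 1]] = m := by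
      ext i j
      fin_cases i <;> fin_cases j <;>
        simp [ht, Matrix.mul_apply, Fin.sum_univ_three, Matrix.vecHead, Matrix.vecTail,
          h20, h21, h22, h10] <;> field_simp
    refine ⟨t, ⟨Or.inl ⟨m 0 0, m 1 1, ha, hb, rfl⟩, ?_⟩, ?_⟩
    · rw [← hprod, ← Matrix.mul_assoc,
        Matrix.nonsing_inv_mul _ ((Matrix.isUnit_iff_isUnit_det _).mp htu), Matrix.one_mul]
      refine ⟨?_, ?_, ?_, ?_, ?_, ?_⟩ <;> simp [Matrix.vecHead, Matrix.vecTail]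
    · rintro t' ⟨ht'mem, ht'U⟩
      have htu' : IsUnit t' := by
        rcases ht'mem with ⟨a, b, ha', hb', rfl⟩ | ⟨p, q, r, hq', hr', rfl⟩
        · exact stmt6_isUnit a 0 0 b (by simpa using mul_ne_zero ha' hb')
        · exact stmt6_isUnit p q r 0 (by simpa using (neg_ne_zero.mpr (mul_ne_zero hq' hr')))
      have hm' : t' * (t'⁻¹ * m) = m := by
        rw [← Matrix.mul_assoc,
          Matrix.mul_nonsing_inv _ ((Matrix.isUnit_iff_isUnit_det _).mp htu'), Matrix.one_mul]
      obtain ⟨hw1, hw4, _, hw2, hw3, hw5⟩ := ht'U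
      rcases ht'mem with ⟨a, b, ha', hb', rfl⟩ | ⟨p, q, r, hq', hr', rfl⟩
      · obtain ⟨e1, e2, e3, e4⟩ := stmt6_key a 0 0 b _ m hw1 hw2 hw3 hw4 hw5 hm'
        rw [ht, ← e1, ← show b = m 1 1 by rw [e4]; ring]
      · obtain ⟨e1, e2, e3, e4⟩ := stmt6_key p q r 0 _ m hw1 hw2 hw3 hw4 hw5 hm'
        exact absurd (h10 ▸ e2.symm) hr'
  · -- S₂ case
    have hD : m 0 1 * m 1 0 - m 0 0 * m 1 1 ≠ 0 := by
      intro hc; apply hdet; linear_combination -hc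
    set t : Matrix (Fin 3) (Fin 3) F :=
      Matrix.of ![![m 0 0, (m 0 1 * m 1 0 - m 0 0 * m 1 1) / m 1 0, 0],
        ![m 1 0, 0, 0], ![0, 0, 1]] with ht
    have hqne : (m 0 1 * m 1 0 - m 0 0 * m 1 1) / m 1 0 ≠ 0 := div_ne_zero hD h10
    have htu : IsUnit t := by
      refine stmt6_isUnit _ _ _ _ ?_
      simpa using neg_ne_zero.mpr (mul_ne_zero hqne h10)
    have hD' : m 1 0 * m 0 1 - m 0 0 * m 1 1 ≠ 0 := by
      intro hc; apply hD; linear_combination hc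
    have hprod : t * Matrix.of ![![1, m 1 1 / m 1 0, m 1 2 / m 1 0],
        ![0, 1, (m 0 2 * m 1 0 - m 0 0 * m 1 2) / (m 0 1 * m 1 0 - m 0 0 * m 1 1)],
        ![0, 0, 1]] = m := by
      ext i j
      fin_cases i <;> fin_cases j <;>
        simp [ht, Matrix.mul_apply, Fin.sum_univ_three, Matrix.vecHead, Matrix.vecTail,
          h20, h21, h22] <;> field_simp <;> ring
    refine ⟨t, ⟨Or.inr ⟨m 0 0, _, m 1 0, hqne, h10, rfl⟩, ?_⟩, ?_⟩
    · rw [← hprod, ← Matrix.mul_assoc,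
        Matrix.nonsing_inv_mul _ ((Matrix.isUnit_iff_isUnit_det _).mp htu), Matrix.one_mul]
      refine ⟨?_, ?_, ?_, ?_, ?_, ?_⟩ <;> simp [Matrix.vecHead, Matrix.vecTail]
    · rintro t' ⟨ht'mem, ht'U⟩
      have htu' : IsUnit t' := by
        rcases ht'mem with ⟨a, b, ha', hb', rfl⟩ | ⟨p, q, r, hq', hr', rfl⟩
        · exact stmt6_isUnit a 0 0 b (by simpa using mul_ne_zero ha' hb')
        · exact stmt6_isUnit p q r 0 (by simpa using (neg_ne_zero.mpr (mul_ne_zero hq' hr')))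
      have hm' : t' * (t'⁻¹ * m) = m := by
        rw [← Matrix.mul_assoc,
          Matrix.mul_nonsing_inv _ ((Matrix.isUnit_iff_isUnit_det _).mp htu'), Matrix.one_mul]
      obtain ⟨hw1, hw4, _, hw2, hw3, hw5⟩ := ht'U
      rcases ht'mem with ⟨a, b, ha', hb', rfl⟩ | ⟨p, q, r, hq', hr', rfl⟩
      · obtain ⟨e1, e2, e3, e4⟩ := stmt6_key a 0 0 b _ m hw1 hw2 hw3 hw4 hw5 hm'
        exact absurd e2 h10
      · obtain ⟨e1, e2, e3, e4⟩ := stmt6_key p q r 0 _ m hw1 hw2 hw3 hw4 hw5 hm'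
        set W := ((Matrix.of ![![p, q, 0], ![r, 0, 0], ![0, 0, (1:F)]])⁻¹ * m) 0 1 with hW
        have eq' : q = (m 0 1 * m 1 0 - m 0 0 * m 1 1) / m 1 0 := by
          rw [eq_div_iff h10]
          linear_combination (-(m 1 0)) * e3 + m 0 0 * e4 + (r * W) * e1 + (-(p * W)) * e2
        rw [ht, ← e1, ← e2, eq']
end

section
/- Let F be a field, m ∈ GL₃(F) with last row (0,0,1) and m₂₁ ≠ 0, and t the matrix with rows (p,q,0),(r,0,0),(0,0,1) with p ∈ F^× and q,r ∈ F^×. Then t⁻¹mt is upper-triangular unipotent if and only if m₁₁ + m₂₂ = 2, m₁₂ = −(m₁₁ − 1)²/m₂₁, and r = p·m₂₁/(m₁₁ − 1). In particular m₁₁ ≠ 1 is forced. -/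
open Matrix

theorem stmt_9 (F : Type) [Field F] [DecidableEq F]
    (m : Matrix (Fin 3) (Fin 3) F) (hunit : IsUnit m)
    (hm : m 2 0 = 0 ∧ m 2 1 = 0 ∧ m 2 2 = 1) (hm21 : m 1 0 ≠ 0)
    (p q r : F) (hp : p ≠ 0) (hq : q ≠ 0) (hr : r ≠ 0)
    (t : Matrix (Fin 3) (Fin 3) F)
    (ht : t = Matrix.of ![![p, q, 0], ![r, 0, 0], ![0, 0, 1]]) :
    ((let c := t⁻¹ * m * t;
      c 0 0 = 1 ∧ c 1 1 = 1 ∧ c 2 2 = 1 ∧ c 1 0 = 0 ∧ c 2 0 = 0 ∧ c 2 1 = 0) ↔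
    (m 0 0 + m 1 1 = 2 ∧ m 0 1 = -(m 0 0 - 1) ^ 2 / m 1 0 ∧
      r = p * m 1 0 / (m 0 0 - 1))) ∧
    ((let c := t⁻¹ * m * t;
      c 0 0 = 1 ∧ c 1 1 = 1 ∧ c 2 2 = 1 ∧ c 1 0 = 0 ∧ c 2 0 = 0 ∧ c 2 1 = 0) →
      m 0 0 ≠ 1) := by
  obtain ⟨h20, h21, h22⟩ := hm
  have hinv : t⁻¹ = Matrix.of ![![0, r⁻¹, 0], ![q⁻¹, -(p/(q*r)), 0], ![0,0,1]] := by
    apply inv_eq_right_inv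
    subst ht
    ext i j
    fin_cases i <;> fin_cases j <;>
      simp [Matrix.mul_apply, Fin.sum_univ_three] <;> (field_simp; try ring)
  have hc00 : (t⁻¹ * m * t) 0 0 = (m 1 0 * p + m 1 1 * r) / r := by
    subst ht
    simp [hinv, Matrix.mul_apply, Fin.sum_univ_three, Matrix.vecMul, dotProduct,
      Matrix.vecHead, Matrix.vecTail]
    field_simp
  have hc11 : (t⁻¹ * m * t) 1 1 = m 0 0 - p * m 1 0 / r := by
    subst ht
    simp [hinv, Matrix.mul_apply, Fin.sum_univ_three, Matrix.vecMul, dotProduct,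
      Matrix.vecHead, Matrix.vecTail]
    field_simp
    ring
  have hc22 : (t⁻¹ * m * t) 2 2 = 1 := by
    subst ht
    simp [hinv, Matrix.mul_apply, Fin.sum_univ_three, Matrix.vecMul, dotProduct,
      Matrix.vecHead, Matrix.vecTail, h20, h21, h22]
  have hc10 : (t⁻¹ * m * t) 1 0 =
      (m 0 0 * p + m 0 1 * r) / q - p / (q * r) * (m 1 0 * p + m 1 1 * r) := by
    subst ht
    simp [hinv, Matrix.mul_apply, Fin.sum_univ_three, Matrix.vecMul, dotProduct,
      Matrix.vecHead, Matrix.vecTail]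
    field_simp
    ring
  have hc20 : (t⁻¹ * m * t) 2 0 = 0 := by
    subst ht
    simp [hinv, Matrix.mul_apply, Fin.sum_univ_three, Matrix.vecMul, dotProduct,
      Matrix.vecHead, Matrix.vecTail, h20, h21, h22]
  have hc21 : (t⁻¹ * m * t) 2 1 = 0 := by
    subst ht
    simp [hinv, Matrix.mul_apply, Fin.sum_univ_three, Matrix.vecMul, dotProduct,
      Matrix.vecHead, Matrix.vecTail, h20, h21, h22]
  constructor
  · constructor
    · intro h
      simp only [hc00, hc11, hc22, hc10, hc20, hc21] at h
      obtain ⟨h1, h2, -, h3, -, -⟩ := h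
      rw [div_eq_one_iff_eq hr] at h1
      have h2' : p * m 1 0 = (m 0 0 - 1) * r := by
        field_simp at h2
        linear_combination -h2
      have hne : m 0 0 - 1 ≠ 0 := by
        intro h
        rw [h, zero_mul] at h2'
        rcases mul_eq_zero.mp h2' with h' | h'
        · exact hp h'
        · exact hm21 h'
      have hsum : m 0 0 + m 1 1 = 2 := by
        have h4 : (m 0 0 + m 1 1 - 2) * r = 0 := by linear_combination h1 - h2'
        have h5 := (mul_eq_zero.mp h4).resolve_right hr
        linear_combination h5
      have h3' : (m 0 0 * p + m 0 1 * r) * (q * r) = q * (p * (m 1 0 * p + m 1 1 * r)) := by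
        field_simp at h3
        linear_combination q * h3
      have key1 : m 0 1 * r = (1 - m 0 0) * p := by
        apply mul_left_cancel₀ hq
        apply mul_right_cancel₀ hr
        linear_combination h3' + q * p * h2' + q * p * r * hsum
      refine ⟨hsum, ?_, ?_⟩
      · rw [eq_div_iff hm21]
        apply mul_right_cancel₀ hr
        linear_combination m 1 0 * key1 + (1 - m 0 0) * h2'
      · rw [eq_div_iff hne]
        linear_combination -h2'
    · rintro ⟨hsum, hb, hrv⟩
      have hne : m 0 0 - 1 ≠ 0 := by
        intro h
        apply hr
        rw [hrv, h, div_zero]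
      have hm11 : m 1 1 = 2 - m 0 0 := by linear_combination hsum
      have hrv' : r * (m 0 0 - 1) = p * m 1 0 := by
        rw [hrv]; field_simp
      have hb' : m 0 1 * m 1 0 = -(m 0 0 - 1) ^ 2 := by
        rw [hb]; field_simp
      simp only [hc00, hc11, hc22, hc10, hc20, hc21]
      refine ⟨?_, ?_, trivial, ?_, trivial, trivial⟩
      · rw [div_eq_one_iff_eq hr]
        linear_combination -hrv' + r * hm11
      · field_simp
        linear_combination hrv'
      · have hm01r : m 0 1 * r ^ 2 = -(p * r) * (m 0 0 - 1) := by
          apply mul_right_cancel₀ hne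
          linear_combination (p * r) * hb' + (m 0 1 * r) * hrv'
        field_simp
        linear_combination hm01r + p * hrv' - p * r * hm11
  · intro h
    simp only [hc00, hc11, hc22, hc10, hc20, hc21] at h
    obtain ⟨h1, h2, -, -, -, -⟩ := h
    intro ha
    rw [div_eq_one_iff_eq hr] at h1
    have h2' : p * m 1 0 = (m 0 0 - 1) * r := by
      field_simp at h2
      linear_combination -h2
    rw [ha, sub_self, zero_mul] at h2'
    rcases mul_eq_zero.mp h2' with h' | h'
    · exact hp h'
    · exact hm21 h'
end

section
/- Let V be a finite-dimensional vector space over a field F and let h be the block operator on V ⊕ V given by h(v, w) = (m₁v + Xw, m₂w) for linear operators m₁, m₂, X on V. Let W' = Ker(m₂ − 1). Then dim Ker(h − 1) = dim Ker(m₁ − 1) + dim Ker(m₂ − 1) − dim(X W') + dim(X W' ∩ Im(m₁ − 1)). -/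
open Module LinearMap Submodule

lemma aux_rn {F V W : Type} [Field F] [AddCommGroup V] [Module F V] [FiniteDimensional F V]
    [AddCommGroup W] [Module F W] (f : V →ₗ[F] W) (p : Submodule F V) :
    finrank F (p.map f) + finrank F ↥(LinearMap.ker f ⊓ p) = finrank F p := by
  have h1 := LinearMap.finrank_range_add_finrank_ker (f.domRestrict p)
  rw [LinearMap.range_domRestrict, LinearMap.ker_domRestrict] at h1
  rw [← h1]
  congr 1
  have e1 : Submodule.comap p.subtype (LinearMap.ker f) =
      Submodule.comap p.subtype (LinearMap.ker f ⊓ p) := by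
    simp [Submodule.comap_inf, Submodule.comap_subtype_self]
  rw [e1]
  exact ((Submodule.comapSubtypeEquivOfLe (inf_le_right : LinearMap.ker f ⊓ p ≤ p)).finrank_eq).symm

theorem stmt_12 (F : Type) [Field F] (V : Type) [AddCommGroup V] [Module F V]
    [FiniteDimensional F V]
    (m₁ m₂ X : Module.End F V) (h : Module.End F (V × V))
    (hh : ∀ v w : V, h (v, w) = (m₁ v + X w, m₂ w)) :
    (Module.finrank F (LinearMap.ker (h - 1)) : ℤ) =
      (Module.finrank F (LinearMap.ker (m₁ - 1)) : ℤ)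
        + Module.finrank F (LinearMap.ker (m₂ - 1))
        - Module.finrank F ((LinearMap.ker (m₂ - 1)).map X)
        + Module.finrank F ↥((LinearMap.ker (m₂ - 1)).map X ⊓
            LinearMap.range (m₁ - 1)) := by
  set W' := LinearMap.ker (m₂ - 1) with hW'
  set R := LinearMap.range (m₁ - 1) with hR
  set K := LinearMap.ker (h - 1) with hK
  set W'' := W' ⊓ Submodule.comap X R with hW''
  have hmem : ∀ v w : V, (v, w) ∈ K ↔ ((m₁ - 1) v + X w = 0 ∧ (m₂ - 1) w = 0) := by
    intro v w
    have key : (h - 1) (v, w) = ((m₁ - 1) v + X w, (m₂ - 1) w) := by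
      rw [LinearMap.sub_apply, hh, Module.End.one_apply]
      refine Prod.ext ?_ ?_
      · show m₁ v + X w - v = (m₁ v - v) + X w
        abel
      · rfl
    rw [hK, LinearMap.mem_ker, key, Prod.mk_eq_zero]
  -- first rank-nullity: snd on K
  have rn1 := aux_rn (LinearMap.snd F V V) K
  have e1 : K.map (LinearMap.snd F V V) = W'' := by
    ext u
    simp only [Submodule.mem_map, hW'', Submodule.mem_inf, Submodule.mem_comap, hW',
      LinearMap.mem_ker, hR, LinearMap.mem_range]
    constructor
    · rintro ⟨⟨v, w⟩, hvw, rfl⟩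
      rw [hmem] at hvw
      exact ⟨hvw.2, -v, by rw [map_neg]; exact neg_eq_of_add_eq_zero_right hvw.1⟩
    · rintro ⟨hu, v, hv⟩
      exact ⟨(-v, u), (hmem _ _).2 ⟨by rw [map_neg, hv]; exact neg_add_cancel _, hu⟩, rfl⟩
  have e2 : LinearMap.ker (LinearMap.snd F V V) ⊓ K =
      (LinearMap.ker (m₁ - 1)).map (LinearMap.inl F V V) := by
    ext ⟨v, w⟩
    simp only [Submodule.mem_inf, LinearMap.mem_ker, LinearMap.snd_apply,
      Submodule.mem_map, LinearMap.inl_apply, Prod.ext_iff]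
    constructor
    · rintro ⟨rfl, hvw⟩
      rw [hmem] at hvw
      exact ⟨v, by simpa using hvw.1, rfl, rfl⟩
    · rintro ⟨u, hu, rfl, rfl⟩
      exact ⟨rfl, (hmem _ _).2 ⟨by simpa using hu, by simp⟩⟩
  have e3 : finrank F ((LinearMap.ker (m₁ - 1)).map (LinearMap.inl F V V)) =
      finrank F (LinearMap.ker (m₁ - 1)) :=
    ((Submodule.equivMapOfInjective _ LinearMap.inl_injective _).finrank_eq).symm
  rw [e1, e2, e3] at rn1
  -- second rank-nullity: X on W''
  have rn2 := aux_rn X W''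
  have e4 : W''.map X = W'.map X ⊓ R := by
    ext u
    simp only [Submodule.mem_map, hW'', Submodule.mem_inf, Submodule.mem_comap]
    constructor
    · rintro ⟨w, ⟨hw1, hw2⟩, rfl⟩
      exact ⟨⟨w, hw1, rfl⟩, hw2⟩
    · rintro ⟨⟨w, hw1, rfl⟩, hw2⟩
      exact ⟨w, ⟨hw1, hw2⟩, rfl⟩
  have e5 : LinearMap.ker X ⊓ W'' = LinearMap.ker X ⊓ W' := by
    ext w
    simp only [hW'', Submodule.mem_inf, Submodule.mem_comap, LinearMap.mem_ker]
    constructor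
    · rintro ⟨h1, h2, _⟩; exact ⟨h1, h2⟩
    · rintro ⟨h1, h2⟩; exact ⟨h1, h2, by rw [h1]; exact zero_mem R⟩
  rw [e4, e5] at rn2
  -- third rank-nullity: X on W'
  have rn3 := aux_rn X W'
  -- combine
  omega
end
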